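/- Let H be a non-empty tree (at least one edge), s, t ∈ ℕ, and Ĥ = ⟨H⟩_{s,t} the graph defined by t disjoint copies of H with additional vertices (v,j)* (for v ∈ V(H) and j ∈ [max(s+1-deg_H(v),0)]) adjacent to the copy of v in each of the t copies. Then K_{s+1,t} is a minor of Ĥ. -/
import Mathlib


open SimpleGraph

/-- The graph `⟨H⟩_{s,t}`: `t` disjoint copies of `H` together with, for each vertex `v` of `H`,
`max(s+1-deg_H(v), 0)` star vertices, each adjacent to the copy of `v` in all `t` copies. -/
noncomputable def hatGraph {V : Type*} (H : SimpleGraph V) (s t : ℕ) :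
    SimpleGraph ((V × Fin t) ⊕ (Σ v : V, Fin (s + 1 - (H.neighborSet v).ncard))) :=
  SimpleGraph.fromRel (fun a b =>
    match a, b with
    | Sum.inl (v, i), Sum.inl (w, j) => i = j ∧ H.Adj v w
    | Sum.inl (v, _), Sum.inr ⟨w, _⟩ => v = w
    | _, _ => False)

/-- A minor model of `H` in `G`: disjoint connected branch sets joined along edges of `H`. -/
def IsMinorModel {α β : Type*} (G : SimpleGraph α) (H : SimpleGraph β)
    (X : β → Set α) : Prop :=
  (∀ b, (G.induce (X b)).Connected) ∧
  (∀ b b', b ≠ b' → Disjoint (X b) (X b')) ∧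
  (∀ b b', H.Adj b b' → ∃ a ∈ X b, ∃ a' ∈ X b', G.Adj a a')

/-- `H` is a minor of `G`. -/
def HasMinor {α β : Type*} (G : SimpleGraph α) (H : SimpleGraph β) : Prop :=
  ∃ X : β → Set α, IsMinorModel G H X

lemma hatGraph_adj_star {V : Type*} (H : SimpleGraph V) (s t : ℕ) (v : V) (j : Fin t)
    (x : Fin (s + 1 - (H.neighborSet v).ncard)) :
    (hatGraph H s t).Adj (Sum.inl (v, j)) (Sum.inr ⟨v, x⟩) := by
  rw [hatGraph, fromRel_adj]
  exact ⟨by simp, Or.inl rfl⟩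

lemma hatGraph_adj_copy {V : Type*} (H : SimpleGraph V) (s t : ℕ) {v w : V} (j : Fin t)
    (h : H.Adj v w) :
    (hatGraph H s t).Adj (Sum.inl (v, j)) (Sum.inl (w, j)) := by
  rw [hatGraph, fromRel_adj]
  exact ⟨by simp [h.ne], Or.inl ⟨rfl, h⟩⟩

/-- If `H` is a non-empty tree then `K_{s+1,t}` is a minor of `⟨H⟩_{s,t}`. -/
theorem stmt8 {V : Type} [Fintype V] (H : SimpleGraph V)
    (hconn : H.Connected) (hacyc : H.IsAcyclic) (hedge : ∃ u v, H.Adj u v)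
    (s t : ℕ) (hs : 1 ≤ s) (ht : 1 ≤ t) :
    HasMinor (hatGraph H s t) (completeBipartiteGraph (Fin (s + 1)) (Fin t)) := by
  classical
  obtain ⟨u0, v0, huv⟩ := hedge
  haveI : Nontrivial V := ⟨u0, v0, huv.ne⟩
  set d : V → ℕ := fun v => s + 1 - (H.neighborSet v).ncard with hd
  -- the degree formula
  have hdeg : ∀ v, (H.neighborSet v).ncard = H.degree v := by
    intro v
    rw [Set.ncard_eq_toFinset_card']
    simp [SimpleGraph.degree, SimpleGraph.neighborFinset]
  have htree : H.IsTree := ⟨hconn, hacyc⟩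
  have hE : H.edgeFinset.card = Fintype.card V - 1 := by
    have := htree.card_edgeFinset; omega
  have hsum : ∑ v, H.degree v = 2 * (Fintype.card V - 1) := by
    rw [H.sum_degrees_eq_twice_card_edges, hE]
  have hn : 2 ≤ Fintype.card V := Fintype.one_lt_card
  -- total number of star vertices is at least s+1
  have hcard : s + 1 ≤ ∑ v, d v := by
    have h1 : ∀ v ∈ Finset.univ, s + 1 ≤ d v + H.degree v := by
      intro v _
      have h0 : s + 1 ≤ (s + 1 - H.degree v) + H.degree v := le_tsub_add
      simpa [hd, hdeg v] using h0
    have h2 : (s + 1) * Fintype.card V ≤ (∑ v, d v) + 2 * (Fintype.card V - 1) := by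
      calc (s + 1) * Fintype.card V = ∑ _v : V, (s + 1) := by
            simp [mul_comm]
        _ ≤ ∑ v, (d v + H.degree v) := Finset.sum_le_sum h1
        _ = (∑ v, d v) + ∑ v, H.degree v := Finset.sum_add_distrib
        _ = (∑ v, d v) + 2 * (Fintype.card V - 1) := by rw [hsum]
    obtain ⟨m, hm⟩ : ∃ m, Fintype.card V = m + 2 := ⟨Fintype.card V - 2, by omega⟩
    rw [hm] at h2
    have hexp : (s + 1) * (m + 2) = (s + 1) * m + 2 * s + 2 := by ring
    have hP : 2 * m ≤ (s + 1) * m := Nat.mul_le_mul_right m (by omega)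
    rw [hexp] at h2
    omega
  have hcard2 : Fintype.card (Fin (s + 1)) ≤
      Fintype.card (Σ v : V, Fin (s + 1 - (H.neighborSet v).ncard)) := by
    simpa [Fintype.card_sigma] using hcard
  obtain ⟨f⟩ := Function.Embedding.nonempty_of_card_le hcard2
  -- the branch sets
  refine ⟨fun b => match b with
    | Sum.inl i => {Sum.inr (f i)}
    | Sum.inr j => {x | ∃ v, x = Sum.inl (v, j)}, ?_, ?_, ?_⟩
  · rintro (i | j)
    · -- singleton is connected
      rw [connected_iff]
      refine ⟨?_, ⟨⟨Sum.inr (f i), rfl⟩⟩⟩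
      rintro ⟨x, hx⟩ ⟨y, hy⟩
      simp only [Set.mem_singleton_iff] at hx hy
      have : (⟨x, hx⟩ : {a // a ∈ ({Sum.inr (f i)} : Set _)}) = ⟨y, hy⟩ :=
        Subtype.ext (hx.trans hy.symm)
      rw [this]
    · -- a copy of H is connected
      rw [connected_iff]
      refine ⟨?_, ⟨⟨Sum.inl (u0, j), ⟨u0, rfl⟩⟩⟩⟩
      rintro ⟨x, v, rfl⟩ ⟨y, w, rfl⟩
      let F : H →g (hatGraph H s t).induce {x | ∃ v, x = Sum.inl (v, j)} :=
        { toFun := fun v => ⟨Sum.inl (v, j), v, rfl⟩,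
          map_rel' := fun hab => hatGraph_adj_copy H s t j hab }
      exact (hconn.preconnected v w).map F
  · -- disjointness
    rintro (i | j) (i' | j') hne
    · have : f i ≠ f i' := f.injective.ne (by rintro rfl; exact hne rfl)
      simp only [Set.disjoint_singleton]
      exact fun h => this (Sum.inr.inj h)
    · rw [Set.disjoint_left]
      rintro a ha ⟨v, rfl⟩
      simp at ha
    · rw [Set.disjoint_left]
      rintro a ⟨v, rfl⟩ ha
      simp at ha
    · rw [Set.disjoint_left]
      rintro a ⟨v, rfl⟩ ⟨w, hw⟩
      obtain ⟨rfl, h2⟩ := Prod.mk.injEq .. ▸ Sum.inl.inj hw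
      exact hne (by rw [h2])
  · -- edges
    rintro (i | j) (i' | j') hadj
    · simp at hadj
    · exact ⟨Sum.inr (f i), rfl, Sum.inl ((f i).1, j'), ⟨(f i).1, rfl⟩,
        ((hatGraph_adj_star H s t (f i).1 j' (f i).2).symm)⟩
    · exact ⟨Sum.inl ((f i').1, j), ⟨(f i').1, rfl⟩, Sum.inr (f i'), rfl,
        (hatGraph_adj_star H s t (f i').1 j (f i').2)⟩
    · simp at hadj
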